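/- arXiv:1411.6184 — 4 statements merged into one kernel-verified Lean document; each statement's English description precedes it below -/
import Mathlib

section
/- For every n ≥ 1, the Eulerian polynomial A_n(t) = Σ_{σ∈S_n} t^{des σ} admits the expansion A_n(t) = Σ_{k=0}^{⌊(n-1)/2⌋} |DD_{n,k}| t^k (1+t)^{n-1-2k}, where DD_{n,k} is the set of permutations σ of [n] with exactly k descents and no double descent in the word σ(1)...σ(n)0. -/
/-!
Split a word around its least letter `m` as `u ++ m :: v`. Descents are additive, up to one more
descent when `u ≠ []`, so `F A = ∑ t ^ des w` over the arrangements `w` of `A` satisfies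
`F A = ∑_{B ⊆ D} t ^ [B ≠ ∅] * F B * F (D \ B)` with `D = A \ {m}`. The absence of double
descents in `w0` is also local to both sides of `m`, except that `m` itself is a double descent
when `v = [] ≠ u`. Hence the right-hand side `G A`, a sum over arrangements without double
descent, satisfies the same recursion with the weights `1 + t` at `B = ∅` and `0` at `B = D`.
Since the terms `B = ∅` and `B = D` agree, `F = G` by strong induction on `A`; the permutations
of `[n]` are the arrangements of `{1, …, n}`.
-/

open Finset

/-- The word `σ(1)…σ(n)0…` (1-based values, 0-based positions), with value 0 beyond position n. -/
def wrd {n : ℕ} (σ : Equiv.Perm (Fin n)) (i : ℕ) : ℕ :=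
  if h : i < n then ((σ ⟨i, h⟩ : Fin n) : ℕ) + 1 else 0

/-- Number of descents of `σ`. -/
def desN {n : ℕ} (σ : Equiv.Perm (Fin n)) : ℕ :=
  ((Finset.range (n - 1)).filter fun i => wrd σ (i + 1) < wrd σ i).card

/-- Number of double descents of the word `σ0`. -/
def ddN {n : ℕ} (σ : Equiv.Perm (Fin n)) : ℕ :=
  ((Finset.Ico 1 n).filter fun i => wrd σ (i + 1) < wrd σ i ∧ wrd σ i < wrd σ (i - 1)).card

/-- Permutations with `k` descents and no double descent in `σ0`. -/
def DDset (n k : ℕ) : Finset (Equiv.Perm (Fin n)) :=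
  Finset.univ.filter fun σ => desN σ = k ∧ ddN σ = 0

/-- Number of excedances. -/
def excN {n : ℕ} (σ : Equiv.Perm (Fin n)) : ℕ :=
  (Finset.univ.filter fun i : Fin n => i < σ i).card

/-- Number of weak excedances. -/
def wexN {n : ℕ} (σ : Equiv.Perm (Fin n)) : ℕ :=
  (Finset.univ.filter fun i : Fin n => i ≤ σ i).card

/-- Number of fixed points. -/
def fixN {n : ℕ} (σ : Equiv.Perm (Fin n)) : ℕ :=
  (Finset.univ.filter fun i : Fin n => σ i = i).card

/-- Number of drops. -/
def dropN {n : ℕ} (σ : Equiv.Perm (Fin n)) : ℕ :=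
  (Finset.univ.filter fun i : Fin n => σ i < i).card

/-- Number of inversions. -/
def invN {n : ℕ} (σ : Equiv.Perm (Fin n)) : ℕ :=
  ((Finset.univ : Finset (Fin n × Fin n)).filter fun p => p.1 < p.2 ∧ σ p.2 < σ p.1).card

/-- Number of cyclic double ascents (double excedances): `i < σ(i) < σ(σ(i))`. -/
def cdaN {n : ℕ} (σ : Equiv.Perm (Fin n)) : ℕ :=
  (Finset.univ.filter fun i : Fin n => i < σ i ∧ σ i < σ (σ i)).card

/-- `les σ` : pairs (i,j), 2 ≤ i < j ≤ n (1-based) with σ(i-1) > σ(j) > σ(i). -/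
def lesN {n : ℕ} (σ : Equiv.Perm (Fin n)) : ℕ :=
  (((Finset.Ico 1 n) ×ˢ (Finset.Ico 1 n)).filter fun p =>
      p.1 < p.2 ∧ wrd σ p.1 < wrd σ p.2 ∧ wrd σ p.2 < wrd σ (p.1 - 1)).card

/-- `res σ` : pairs (i,j), 1 ≤ i < j ≤ n-1 (1-based) with σ(j+1) > σ(i) > σ(j). -/
def resN {n : ℕ} (σ : Equiv.Perm (Fin n)) : ℕ :=
  (((Finset.range (n - 1)) ×ˢ (Finset.range (n - 1))).filter fun p =>
      p.1 < p.2 ∧ wrd σ p.2 < wrd σ p.1 ∧ wrd σ p.1 < wrd σ (p.2 + 1)).card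

/-- Crossings. -/
def crosN {n : ℕ} (σ : Equiv.Perm (Fin n)) : ℕ :=
  ((Finset.univ : Finset (Fin n × Fin n)).filter fun p =>
      (p.1 < p.2 ∧ p.2 ≤ σ p.1 ∧ σ p.1 < σ p.2) ∨
      (p.2 < p.1 ∧ σ p.1 < p.2 ∧ σ p.2 < σ p.1)).card

/-- Nestings. -/
def nestN {n : ℕ} (σ : Equiv.Perm (Fin n)) : ℕ :=
  ((Finset.univ : Finset (Fin n × Fin n)).filter fun p =>
      (p.1 < p.2 ∧ p.2 ≤ σ p.2 ∧ σ p.2 < σ p.1) ∨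
      (p.2 < p.1 ∧ σ p.2 < p.2 ∧ σ p.1 < σ p.2)).card

/-- Derangements of `[n]`. -/
def Der (n : ℕ) : Finset (Equiv.Perm (Fin n)) :=
  Finset.univ.filter fun σ => ∀ i, σ i ≠ i

/-- Derangements with `k` excedances and no cyclic double ascent. -/
def DEset (n k : ℕ) : Finset (Equiv.Perm (Fin n)) :=
  (Der n).filter fun σ => excN σ = k ∧ cdaN σ = 0

/-- `γ_{n,i,j}`: permutations with `i` fixed points, `j` excedances, no double excedance. -/
def gam (n i j : ℕ) : ℕ :=
  (Finset.univ.filter fun τ : Equiv.Perm (Fin n) =>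
      fixN τ = i ∧ excN τ = j ∧ cdaN τ = 0).card

/-- `γ_{n,k}^{(2)}`: permutations with `k` weak excedances and no double excedance. -/
def gam2 (n k : ℕ) : ℕ :=
  (Finset.univ.filter fun τ : Equiv.Perm (Fin n) => wexN τ = k ∧ cdaN τ = 0).card

/-- Derangements in the wreath product `Z_r ≀ S_n` (no `i` with `π i = i` and color 0). -/
def ColDer (r n : ℕ) : Finset (Equiv.Perm (Fin n) × (Fin n → Fin r)) :=
  Finset.univ.filter fun σ => ∀ i, σ.1 i = i → (σ.2 i : ℕ) ≠ 0

/-- Flag excedance. -/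
def fexc {r n : ℕ} (σ : Equiv.Perm (Fin n) × (Fin n → Fin r)) : ℕ :=
  r * excN σ.1 + ∑ i, (σ.2 i : ℕ)

/-- Excedance with respect to the friends order. -/
def cexc {r n : ℕ} (σ : Equiv.Perm (Fin n) × (Fin n → Fin r)) : ℕ :=
  excN σ.1 + (Finset.univ.filter fun i => i ≤ σ.1 i ∧ (σ.2 i : ℕ) ≠ 0).card

/-- `D_n^{(r)}(t)` as a polynomial in `ℤ[t]`. -/
noncomputable def DPoly (r n : ℕ) : Polynomial ℤ :=
  ∑ σ ∈ ColDer r n, Polynomial.X ^ fexc σ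

/-- `d_n^{(r)}(t)` as a polynomial in `ℤ[t]`. -/
noncomputable def dPolyC (r n : ℕ) : Polynomial ℤ :=
  ∑ σ ∈ ColDer r n, Polynomial.X ^ cexc σ

/-- The type-A derangement polynomial `d_n(t)`. -/
noncomputable def derPoly (n : ℕ) : Polynomial ℤ :=
  ∑ σ ∈ Der n, Polynomial.X ^ excN σ

/-- Drop-colored permutations (colors 1,2 allowed only on drops) without double excedance. -/
def DCset (n : ℕ) : Finset (Equiv.Perm (Fin n) × (Fin n → Fin 3)) :=
  Finset.univ.filter fun σ => cdaN σ.1 = 0 ∧ ∀ i, (σ.2 i : ℕ) ≠ 0 → σ.1 i < i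

/-- Number of colored drops. -/
def cdropN {n : ℕ} (σ : Equiv.Perm (Fin n) × (Fin n → Fin 3)) : ℕ :=
  (Finset.univ.filter fun i => (σ.2 i : ℕ) ≠ 0).card

/-- `ĝ_{n,k}`. -/
def ghat (n k : ℕ) : ℕ :=
  ((DCset n).filter fun σ => wexN σ.1 + cdropN σ = k).card


open Finset

def descents : List ℕ → ℕ
  | a :: b :: l => (if b < a then 1 else 0) + descents (b :: l)
  | _ => 0

-- `l.headD 0` is the letter after `b` in the word followed by a trailing `0`.
def NoDoubleDescent : List ℕ → Prop
  | a :: b :: l => ¬(l.headD 0 < b ∧ b < a) ∧ NoDoubleDescent (b :: l)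
  | _ => True

instance decidableNoDoubleDescent : DecidablePred NoDoubleDescent
  | [] | [_] => isTrue trivial
  | a :: b :: l =>
    haveI := decidableNoDoubleDescent (b :: l)
    inferInstanceAs (Decidable (¬(l.headD 0 < b ∧ b < a) ∧ NoDoubleDescent (b :: l)))

theorem descents_cons_of_lt {m : ℕ} {v : List ℕ} (hv : ∀ x ∈ v, m < x) :
    descents (m :: v) = descents v := by
  cases v with
  | nil => rfl
  | cons b l => simp [descents, (hv b (by simp)).not_gt]

theorem descents_append_cons {m : ℕ} :
    ∀ {u v : List ℕ}, (∀ x ∈ u, m < x) → (∀ x ∈ v, m < x) →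
      descents (u ++ m :: v) = descents u + descents v + if u = [] then 0 else 1
  | [], _, _, hv => by simp [descents_cons_of_lt hv, descents]
  | [a], _, hu, hv => by
    simp [descents, hu a (by simp), descents_cons_of_lt hv, add_comm]
  | a :: b :: l, v, hu, hv => by
    have ih := descents_append_cons (u := b :: l) (fun x hx => hu x (by simp_all)) hv
    simp only [List.cons_append] at ih ⊢
    simp only [descents, ih, reduceCtorEq, if_false]
    omega

theorem noDoubleDescent_cons_of_lt {m : ℕ} {v : List ℕ} (hv : ∀ x ∈ v, m < x) :
    NoDoubleDescent (m :: v) ↔ NoDoubleDescent v := by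
  cases v with
  | nil => simp [NoDoubleDescent]
  | cons b l => simp [NoDoubleDescent, (hv b (by simp)).not_gt]

theorem noDoubleDescent_cons_cons (a b : ℕ) (l : List ℕ) :
    NoDoubleDescent (a :: b :: l) ↔ ¬(l.headD 0 < b ∧ b < a) ∧ NoDoubleDescent (b :: l) :=
  Iff.rfl

theorem headD_append_cons_lt_iff {m b : ℕ} (hb : m < b) (l v : List ℕ) :
    (l ++ m :: v).headD 0 < b ↔ l.headD 0 < b := by
  cases l <;> simp [hb, Nat.zero_lt_of_lt hb]

theorem noDoubleDescent_append_cons {m : ℕ} {v : List ℕ} (hv : ∀ x ∈ v, m < x) (hv₀ : v ≠ []) :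
    ∀ {u : List ℕ}, (∀ x ∈ u, m < x) →
      (NoDoubleDescent (u ++ m :: v) ↔ NoDoubleDescent u ∧ NoDoubleDescent v)
  | [], _ => by simp [noDoubleDescent_cons_of_lt hv, NoDoubleDescent]
  | [a], hu => by
    obtain ⟨b, l, rfl⟩ := List.exists_cons_of_ne_nil hv₀
    simp [NoDoubleDescent, (hv b (by simp)).not_gt]
  | a :: b :: l, hu => by
    have ih := noDoubleDescent_append_cons hv hv₀ (u := b :: l) (fun x hx => hu x (by simp_all))
    rw [List.cons_append, List.cons_append, noDoubleDescent_cons_cons, noDoubleDescent_cons_cons,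
      headD_append_cons_lt_iff (hu b (by simp)), ← List.cons_append, ih, and_assoc]

theorem not_noDoubleDescent_append_singleton {m : ℕ} (hm : 0 < m) :
    ∀ {u : List ℕ}, u ≠ [] → (∀ x ∈ u, m < x) → ¬NoDoubleDescent (u ++ [m])
  | [a], _, hu => by simp [NoDoubleDescent, hm, hu a (by simp)]
  | a :: b :: l, _, hu => by
    have ih := not_noDoubleDescent_append_singleton hm (u := b :: l) (by simp)
      (fun x hx => hu x (by simp_all))
    rw [List.cons_append, List.cons_append, noDoubleDescent_cons_cons, ← List.cons_append]
    exact fun h => ih h.2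

theorem two_mul_descents_le :
    ∀ {l : List ℕ}, (∀ x ∈ l, 0 < x) → NoDoubleDescent l → 2 * descents l ≤ l.length - 1
  | [], _, _ | [_], _, _ => by simp [descents]
  | [a, b], hl, hdd => by
    have : 0 < b := hl b (by simp)
    simp_all [NoDoubleDescent, descents, not_lt_of_ge]
  | a :: b :: c :: l, hl, ⟨hab, hdd⟩ => by
    by_cases hba : b < a
    · have hcb : ¬c < b := fun hcb => hab ⟨hcb, hba⟩
      have ih := two_mul_descents_le (l := c :: l) (fun x hx => hl x (by simp_all)) hdd.2
      simp only [descents, hba, hcb, if_true, if_false, List.length_cons] at ih ⊢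
      omega
    · have ih := two_mul_descents_le (l := b :: c :: l) (fun x hx => hl x (by simp_all)) hdd
      simp only [descents, hba, if_false, List.length_cons] at ih ⊢
      omega

section GammaTerm

variable {R : Type*} [CommSemiring R] (t : R)

def gammaTerm (w : List ℕ) : R :=
  if NoDoubleDescent w then t ^ descents w * (1 + t) ^ (w.length - 1 - 2 * descents w) else 0

theorem gammaTerm_nil : gammaTerm t [] = 1 := by
  simp [gammaTerm, NoDoubleDescent, descents]

variable {t} {m : ℕ} {u v : List ℕ}

theorem gammaTerm_cons_of_lt (hv : ∀ x ∈ v, m < x) (hv₀ : v ≠ []) :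
    gammaTerm t (m :: v) = (1 + t) * gammaTerm t v := by
  unfold gammaTerm
  rw [if_congr (noDoubleDescent_cons_of_lt hv) rfl rfl, descents_cons_of_lt hv]
  split_ifs with hdd
  · have := two_mul_descents_le (fun x hx => Nat.zero_lt_of_lt (hv x hx)) hdd
    have := List.length_pos_iff.mpr hv₀
    rw [List.length_cons, show v.length + 1 - 1 - 2 * descents v
      = v.length - 1 - 2 * descents v + 1 by omega, pow_succ]
    ring
  · rw [mul_zero]

theorem gammaTerm_append_singleton (hm : 0 < m) (hu₀ : u ≠ []) (hu : ∀ x ∈ u, m < x) :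
    gammaTerm t (u ++ [m]) = 0 :=
  if_neg (not_noDoubleDescent_append_singleton hm hu₀ hu)

theorem gammaTerm_append_cons (hu : ∀ x ∈ u, m < x) (hv : ∀ x ∈ v, m < x) (hu₀ : u ≠ [])
    (hv₀ : v ≠ []) : gammaTerm t (u ++ m :: v) = t * gammaTerm t u * gammaTerm t v := by
  unfold gammaTerm
  rw [if_congr (noDoubleDescent_append_cons hv hv₀ hu) rfl rfl, descents_append_cons hu hv,
    if_neg hu₀]
  by_cases hdu : NoDoubleDescent u <;> by_cases hdv : NoDoubleDescent v <;> simp only [hdu, hdv,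
    and_self, and_false, false_and, if_true, if_false, mul_zero, zero_mul]
  have := two_mul_descents_le (fun x hx => Nat.zero_lt_of_lt (hu x hx)) hdu
  have := two_mul_descents_le (fun x hx => Nat.zero_lt_of_lt (hv x hx)) hdv
  have := List.length_pos_iff.mpr hu₀
  have := List.length_pos_iff.mpr hv₀
  rw [List.length_append, List.length_cons, show u.length + (v.length + 1) - 1
    - 2 * (descents u + descents v + 1) = (u.length - 1 - 2 * descents u)
    + (v.length - 1 - 2 * descents v) by omega]
  ring

end GammaTerm

def arrangements (A : Finset ℕ) : Finset (List ℕ) :=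
  (A.sort (· ≤ ·)).permutations.toFinset

section Arrangements

variable {A : Finset ℕ} {l : List ℕ}

theorem mem_arrangements : l ∈ arrangements A ↔ l.Nodup ∧ l.toFinset = A := by
  rw [arrangements, List.mem_toFinset, List.mem_permutations]
  refine ⟨fun h => ⟨h.nodup_iff.mpr (A.sort_nodup _), ?_⟩,
    fun ⟨hl, hA⟩ => List.perm_of_nodup_nodup_toFinset_eq hl (A.sort_nodup _) ?_⟩
  · rw [List.toFinset_eq_of_perm _ _ h, sort_toFinset]
  · rw [hA, sort_toFinset]

theorem mem_of_mem_arrangements (hl : l ∈ arrangements A) {x : ℕ} (hx : x ∈ l) : x ∈ A :=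
  (mem_arrangements.mp hl).2 ▸ List.mem_toFinset.mpr hx

theorem eq_nil_iff_of_mem_arrangements (hl : l ∈ arrangements A) : l = [] ↔ A = ∅ := by
  rw [← (mem_arrangements.mp hl).2, List.toFinset_eq_empty_iff]

theorem card_arrangements (A : Finset ℕ) : #(arrangements A) = (#A).factorial := by
  rw [arrangements, List.toFinset_card_of_nodup (List.nodup_permutations _ (A.sort_nodup _)),
    List.length_permutations, length_sort]

theorem arrangements_empty : arrangements ∅ = {[]} := by
  simp [arrangements]

theorem sum_arrangements_insert {M : Type*} [AddCommMonoid M] {m : ℕ} {D : Finset ℕ} (hm : m ∉ D)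
    (φ : List ℕ → M) :
    ∑ w ∈ arrangements (insert m D), φ w =
      ∑ B ∈ D.powerset, ∑ u ∈ arrangements B, ∑ v ∈ arrangements (D \ B), φ (u ++ m :: v) := by
  simp_rw [← sum_product']
  rw [sum_sigma', ← sum_image (f := φ)
    (g := fun x : (_ : Finset ℕ) × List ℕ × List ℕ => x.2.1 ++ m :: x.2.2)]
  · congr 1
    ext w
    simp only [mem_image, mem_sigma, mem_powerset, mem_product, mem_arrangements, Sigma.exists,
      Prod.exists]
    constructor
    · rintro ⟨hnd, hw⟩
      obtain ⟨u, v, rfl⟩ := List.append_of_mem (List.mem_toFinset.mp (hw ▸ mem_insert_self m D))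
      simp only [List.nodup_append, List.nodup_cons, List.mem_cons] at hnd
      simp only [Finset.ext_iff, List.mem_toFinset, List.mem_append, List.mem_cons,
        mem_insert] at hw
      refine ⟨u.toFinset, u, v, ⟨fun x hx => ?_, ⟨hnd.1, rfl⟩, hnd.2.1.2, ?_⟩, rfl⟩
      · rw [List.mem_toFinset] at hx
        grind
      · ext x
        simp only [List.mem_toFinset, mem_sdiff]
        grind
    · rintro ⟨B, u, v, ⟨hB, ⟨hu, rfl⟩, hv, hvD⟩, rfl⟩
      simp only [Finset.ext_iff, mem_sdiff, List.mem_toFinset] at hvD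
      simp only [Finset.subset_iff, List.mem_toFinset] at hB
      simp only [List.nodup_append, List.nodup_cons, List.mem_cons, Finset.ext_iff,
        List.mem_toFinset, List.mem_append, mem_insert]
      grind
  · rintro ⟨B, u, v⟩ hx ⟨B', u', v'⟩ hx' h
    simp only [coe_sigma, Set.mem_sigma_iff, mem_coe, mem_powerset, coe_product, Set.mem_prod,
      mem_arrangements] at hx hx'
    obtain ⟨hB, ⟨-, rfl⟩, -, hvD⟩ := hx
    obtain ⟨-, ⟨-, rfl⟩, -, -⟩ := hx'
    have hmu : m ∉ u := fun h => hm (hB (List.mem_toFinset.mpr h))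
    have hmv : m ∉ v := fun h => hm (mem_sdiff.mp (hvD ▸ List.mem_toFinset.mpr h)).1
    obtain ⟨rfl, -, rfl⟩ := (List.append_cons_inj_of_notMem hmu hmv).mp h
    rfl

end Arrangements

theorem sum_arrangements_insert_eq_sum_mul {R : Type*} [CommSemiring R] {m : ℕ} {D : Finset ℕ}
    (hm : m ∉ D) (φ : List ℕ → R) (c : Finset ℕ → R)
    (hφ : ∀ B ⊆ D, ∀ u ∈ arrangements B, ∀ v ∈ arrangements (D \ B),
      φ (u ++ m :: v) = c B * φ u * φ v) :
    ∑ w ∈ arrangements (insert m D), φ w =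
      ∑ B ∈ D.powerset, c B * (∑ u ∈ arrangements B, φ u) * ∑ v ∈ arrangements (D \ B), φ v := by
  rw [sum_arrangements_insert hm]
  refine sum_congr rfl fun B hB => ?_
  rw [mul_assoc, sum_mul_sum, mul_sum]
  refine sum_congr rfl fun u hu => ?_
  rw [mul_sum]
  refine sum_congr rfl fun v hv => ?_
  rw [hφ B (mem_powerset.mp hB) u hu v hv, mul_assoc]

section Recursions

variable {R : Type*} [CommSemiring R] (t : R) {m : ℕ} {D : Finset ℕ}

theorem sum_arrangements_insert_pow_descents (hmD : ∀ x ∈ D, m < x) :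
    ∑ w ∈ arrangements (insert m D), t ^ descents w =
      ∑ B ∈ D.powerset, (if B = ∅ then 1 else t) * (∑ u ∈ arrangements B, t ^ descents u) *
        ∑ v ∈ arrangements (D \ B), t ^ descents v := by
  refine sum_arrangements_insert_eq_sum_mul (fun h => (hmD m h).false) _ _
    fun B hB u hu v hv => ?_
  rw [descents_append_cons (fun x hx => hmD x (hB (mem_of_mem_arrangements hu hx)))
    (fun x hx => hmD x (sdiff_subset (mem_of_mem_arrangements hv hx))), pow_add, pow_add]
  simp only [eq_nil_iff_of_mem_arrangements hu]
  split_ifs <;> ring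

theorem sum_arrangements_insert_gammaTerm (hm : 0 < m) (hmD : ∀ x ∈ D, m < x) (hD : D ≠ ∅) :
    ∑ w ∈ arrangements (insert m D), gammaTerm t w =
      ∑ B ∈ D.powerset, (if B = ∅ then 1 + t else if B = D then 0 else t) *
        (∑ u ∈ arrangements B, gammaTerm t u) * ∑ v ∈ arrangements (D \ B), gammaTerm t v := by
  refine sum_arrangements_insert_eq_sum_mul (fun h => (hmD m h).false) _ _
    fun B hB u hu v hv => ?_
  have hum : ∀ x ∈ u, m < x := fun x hx => hmD x (hB (mem_of_mem_arrangements hu hx))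
  have hvm : ∀ x ∈ v, m < x := fun x hx => hmD x (sdiff_subset (mem_of_mem_arrangements hv hx))
  have hv_nil : v = [] ↔ B = D := by
    rw [eq_nil_iff_of_mem_arrangements hv, sdiff_eq_empty_iff_subset]
    exact ⟨fun h => subset_antisymm hB h, fun h => h.ge⟩
  by_cases hB_empty : B = ∅
  · obtain rfl : u = [] := (eq_nil_iff_of_mem_arrangements hu).mpr hB_empty
    rw [if_pos hB_empty, gammaTerm_nil, mul_one, List.nil_append,
      gammaTerm_cons_of_lt hvm (fun h => hD (hB_empty ▸ hv_nil.mp h).symm)]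
  have hu₀ : u ≠ [] := fun h => hB_empty ((eq_nil_iff_of_mem_arrangements hu).mp h)
  by_cases hBD : B = D
  · obtain rfl : v = [] := hv_nil.mpr hBD
    rw [if_neg hB_empty, if_pos hBD, zero_mul, zero_mul, gammaTerm_append_singleton hm hu₀ hum]
  · rw [if_neg hB_empty, if_neg hBD, gammaTerm_append_cons hum hvm hu₀ (fun h => hBD (hv_nil.mp h))]

end Recursions

theorem sum_powerset_ite_eq_sum_powerset_ite {α R : Type*} [DecidableEq α] [CommSemiring R]
    (t : R) {D : Finset α} (hD : D ≠ ∅) (f : Finset α → R) (hf : f D = f ∅) :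
    ∑ B ∈ D.powerset, (if B = ∅ then 1 else t) * f B =
      ∑ B ∈ D.powerset, (if B = ∅ then 1 + t else if B = D then 0 else t) * f B := by
  have hD' : D ∈ D.powerset.erase ∅ := mem_erase.mpr ⟨hD, mem_powerset_self D⟩
  rw [← add_sum_erase _ _ (empty_mem_powerset D), ← add_sum_erase _ _ hD',
    ← add_sum_erase _ _ (empty_mem_powerset D), ← add_sum_erase _ _ hD']
  have hrest : ∀ B ∈ (D.powerset.erase ∅).erase D,
      (if B = ∅ then 1 else t) * f B = (if B = ∅ then 1 + t else if B = D then 0 else t) * f B :=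
    fun B hB => by
      rw [if_neg (mem_erase.mp (mem_erase.mp hB).2).1, if_neg (mem_erase.mp (mem_erase.mp hB).2).1,
        if_neg (mem_erase.mp hB).1]
  rw [sum_congr rfl hrest]
  simp only [if_neg hD, if_neg (Ne.symm hD), hf, if_true]
  ring

theorem sum_arrangements_pow_descents_eq_sum_gammaTerm {R : Type*} [CommSemiring R] (t : R)
    {A : Finset ℕ} (h0 : 0 ∉ A) :
    ∑ w ∈ arrangements A, t ^ descents w = ∑ w ∈ arrangements A, gammaTerm t w := by
  induction A using Finset.strongInduction with
  | H A ih =>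
  obtain rfl | hA := A.eq_empty_or_nonempty
  · simp [arrangements_empty, descents, gammaTerm_nil]
  set m := A.min' hA
  set D := A.erase m
  have hAD : A = insert m D := (insert_erase (min'_mem A hA)).symm
  have hmD : ∀ x ∈ D, m < x := fun x hx => min'_lt_of_mem_erase_min' A hA hx
  have hm : 0 < m := Nat.pos_of_ne_zero fun h => h0 (h ▸ min'_mem A hA)
  by_cases hD : D = ∅
  · rw [hAD, hD, sum_arrangements_insert (notMem_empty m),
      sum_arrangements_insert (notMem_empty m)]
    simp [arrangements_empty, descents, gammaTerm, NoDoubleDescent]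
  have ihD : ∀ B ⊆ D,
      ∑ w ∈ arrangements B, t ^ descents w = ∑ w ∈ arrangements B, gammaTerm t w :=
    fun B hB => ih B (hB.trans_ssubset (erase_ssubset (min'_mem A hA)))
      fun h => h0 (erase_subset _ _ (hB h))
  rw [hAD, sum_arrangements_insert_pow_descents t hmD,
    sum_arrangements_insert_gammaTerm t hm hmD hD]
  simp_rw [mul_assoc]
  rw [sum_powerset_ite_eq_sum_powerset_ite t hD _
    (by simp [sdiff_self, arrangements_empty, descents, mul_comm])]
  refine sum_congr rfl fun B hB => ?_
  rw [ihD B (mem_powerset.mp hB), ihD (D \ B) sdiff_subset]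

theorem descents_eq_card_filter :
    ∀ l : List ℕ, descents l = #{i ∈ range (l.length - 1) | l.getD (i + 1) 0 < l.getD i 0}
  | [] | [_] => by simp [descents]
  | a :: b :: l => by
    rw [descents, descents_eq_card_filter (b :: l), card_filter, card_filter]
    simp only [List.length_cons, Nat.add_sub_cancel]
    rw [sum_range_succ', add_comm]
    simp only [List.getD_cons_succ, List.getD_cons_zero]

theorem noDoubleDescent_iff_getD : ∀ l : List ℕ, NoDoubleDescent l ↔
    ∀ i, ¬(l.getD (i + 2) 0 < l.getD (i + 1) 0 ∧ l.getD (i + 1) 0 < l.getD i 0)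
  | [] | [_] => by simp [NoDoubleDescent]
  | a :: b :: l => by
    rw [noDoubleDescent_cons_cons, noDoubleDescent_iff_getD (b :: l)]
    constructor
    · rintro ⟨h₀, h⟩ (_ | i)
      · cases l <;> simpa using h₀
      · simpa using h i
    · intro h
      exact ⟨by cases l <;> simpa using h 0, fun i => by simpa using h (i + 1)⟩

def permWord {n : ℕ} (σ : Equiv.Perm (Fin n)) : List ℕ :=
  List.ofFn fun i => (σ i : ℕ) + 1

section PermWord

variable {n : ℕ}

theorem length_permWord (σ : Equiv.Perm (Fin n)) : (permWord σ).length = n :=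
  List.length_ofFn

theorem wrd_eq_getD (σ : Equiv.Perm (Fin n)) (i : ℕ) : wrd σ i = (permWord σ).getD i 0 := by
  unfold wrd
  split_ifs with h
  · simp [permWord, h]
  · simp [permWord, not_lt.mp h]

theorem permWord_injective : Function.Injective (permWord (n := n)) := fun σ τ h =>
  Equiv.ext fun i => Fin.ext (by simpa using congrFun (List.ofFn_injective h) i)

theorem permWord_mem_arrangements (σ : Equiv.Perm (Fin n)) :
    permWord σ ∈ arrangements (Icc 1 n) := by
  have hnd : (permWord σ).Nodup :=
    List.nodup_ofFn.mpr fun i j h => σ.injective (Fin.ext (by simpa using h))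
  refine mem_arrangements.mpr ⟨hnd, eq_of_subset_of_card_le (fun x hx => ?_) ?_⟩
  · obtain ⟨i, rfl⟩ := List.mem_ofFn.mp (List.mem_toFinset.mp hx)
    simp [Nat.succ_le_of_lt (σ i).isLt]
  · rw [List.toFinset_card_of_nodup hnd, length_permWord, Nat.card_Icc, Nat.add_sub_cancel]

theorem image_permWord :
    (univ : Finset (Equiv.Perm (Fin n))).image permWord = arrangements (Icc 1 n) := by
  refine eq_of_subset_of_card_le (fun w hw => ?_) ?_
  · obtain ⟨σ, -, rfl⟩ := mem_image.mp hw
    exact permWord_mem_arrangements σ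
  · rw [card_arrangements, card_image_of_injective _ permWord_injective, card_univ,
      Fintype.card_perm, Fintype.card_fin, Nat.card_Icc, Nat.add_sub_cancel]

theorem desN_eq_descents (σ : Equiv.Perm (Fin n)) : desN σ = descents (permWord σ) := by
  simp only [desN, wrd_eq_getD, descents_eq_card_filter, length_permWord]

theorem ddN_eq_zero_iff (σ : Equiv.Perm (Fin n)) : ddN σ = 0 ↔ NoDoubleDescent (permWord σ) := by
  rw [ddN, card_eq_zero, filter_eq_empty_iff, noDoubleDescent_iff_getD]
  simp only [wrd_eq_getD, mem_Ico]
  constructor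
  · intro h i
    by_cases hi : i + 1 < n
    · simpa using @h (i + 1) ⟨Nat.le_add_left 1 i, hi⟩
    · have hzero : ∀ j, i + 1 ≤ j → (permWord σ).getD j 0 = 0 := fun j hj =>
        List.getD_eq_default _ _ (by rw [length_permWord]; omega)
      rw [hzero (i + 2) (by omega), hzero (i + 1) le_rfl]
      exact fun h => lt_irrefl 0 h.1
  · rintro h i ⟨hi, -⟩
    obtain ⟨j, rfl⟩ := Nat.exists_eq_add_of_le' hi
    simpa using h j

theorem two_mul_desN_le (σ : Equiv.Perm (Fin n)) (hσ : ddN σ = 0) : 2 * desN σ ≤ n - 1 := by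
  have hpos : ∀ x ∈ permWord σ, 0 < x := fun x hx =>
    (mem_Icc.mp (mem_of_mem_arrangements (permWord_mem_arrangements σ) hx)).1
  simpa only [desN_eq_descents, length_permWord] using
    two_mul_descents_le hpos ((ddN_eq_zero_iff σ).mp hσ)

theorem sum_pow_desN_eq_sum_gamma {R : Type*} [CommSemiring R] (t : R) :
    ∑ σ : Equiv.Perm (Fin n), t ^ desN σ =
      ∑ σ : Equiv.Perm (Fin n) with ddN σ = 0, t ^ desN σ * (1 + t) ^ (n - 1 - 2 * desN σ) := by
  simp only [desN_eq_descents]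
  rw [← sum_image (f := fun w => t ^ descents w) permWord_injective.injOn, image_permWord,
    sum_arrangements_pow_descents_eq_sum_gammaTerm t (by simp), ← image_permWord,
    sum_image permWord_injective.injOn, sum_filter]
  refine sum_congr rfl fun σ _ => ?_
  simp only [gammaTerm, ddN_eq_zero_iff, length_permWord]

end PermWord

theorem stmt0_general (n : ℕ) (t : ℤ) :
    (∑ σ : Equiv.Perm (Fin n), t ^ desN σ) =
      ∑ k ∈ Finset.range ((n - 1) / 2 + 1),
        ((DDset n k).card : ℤ) * t ^ k * (1 + t) ^ (n - 1 - 2 * k) := by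
  have hdes : ∀ σ : Equiv.Perm (Fin n), ddN σ = 0 → desN σ ∈ range ((n - 1) / 2 + 1) :=
    fun σ hσ => mem_range.mpr (by have := two_mul_desN_le σ hσ; omega)
  rw [sum_pow_desN_eq_sum_gamma, ← sum_fiberwise_of_maps_to fun σ hσ => hdes σ (mem_filter.mp hσ).2]
  refine sum_congr rfl fun k _ => ?_
  rw [DDset, filter_filter, card_eq_sum_ones, Nat.cast_sum, sum_mul, sum_mul]
  refine sum_congr (by simp only [and_comm]) fun σ hσ => ?_
  rw [(mem_filter.mp hσ).2.1, Nat.cast_one, one_mul]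

theorem stmt0 (n : ℕ) (hn : 1 ≤ n) (t : ℤ) :
    (∑ σ : Equiv.Perm (Fin n), t ^ desN σ) =
      ∑ k ∈ Finset.range ((n - 1) / 2 + 1),
        ((DDset n k).card : ℤ) * t ^ k * (1 + t) ^ (n - 1 - 2 * k) :=
  stmt0_general n t
end

section
/- For every n ≥ 1, the derangement polynomial d_n(t) = Σ_{σ∈D_n} t^{exc σ} satisfies d_n(t) = Σ_{0 ≤ k ≤ n/2} |DE_{n,k}| t^k (1+t)^{n-2k}, hence its coefficients form a symmetric, unimodal sequence. -/
open Finset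

/-!
Each letter `u` of a derangement `σ` has a cyclic type, read off from `σ⁻¹ u, u, σ u`. A cyclic
double ascent `x` (`σ⁻¹ x < x < σ x`) becomes a cyclic double descent when `x` is cut out of its
cycle and reinserted right after the first letter above `x` met when walking backwards from `x`.
This move changes the type of no other letter, lowers the number of excedances by one, and can be
undone. Lowering the double ascents one at a time, largest first, therefore gives a bijection
between derangements and pairs `(τ, S)`, where `τ` is a derangement without cyclic double ascents,
`S` is a set of cyclic double descents of `τ`, and `exc = exc τ + #S`. For such `τ`, comparing
the excedances of `τ` and `τ⁻¹` gives `#(cyclic double descents) = n - 2 exc τ`, so the class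
of `τ` contributes `t ^ exc τ * (1 + t) ^ (n - 2 exc τ)`. Every such term is palindromic about
`n / 2`, and its binomial coefficients increase up to the middle.
-/

theorem Finset.max'_insert_of_forall_lt {ι : Type*} [LinearOrder ι] {a : ι} {s : Finset ι}
    (h : ∀ y ∈ s, y < a) : (insert a s).max' (insert_nonempty a s) = a :=
  le_antisymm (max'_le _ _ _ fun y hy => (mem_insert.mp hy).elim le_of_eq fun hy => (h y hy).le)
    (le_max' _ _ (mem_insert_self a s))

structure Hopping (α ι : Type*) [LinearOrder ι] where
  asc : α → Finset ι
  desc : α → Finset ι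
  down : α → ι → α
  up : α → ι → α
  asc_down {σ : α} {x : ι} : x ∈ asc σ → asc (down σ x) = (asc σ).erase x
  desc_down {σ : α} {x : ι} : x ∈ asc σ → desc (down σ x) = insert x (desc σ)
  notMem_desc_of_mem_asc {σ : α} {x : ι} : x ∈ asc σ → x ∉ desc σ
  mem_asc_up {τ : α} {x : ι} : x ∈ desc τ → x ∈ asc (up τ x)
  down_up {τ : α} {x : ι} : x ∈ desc τ → down (up τ x) x = τ
  up_down {σ : α} {x : ι} : x ∈ asc σ → up (down σ x) x = σ

namespace Hopping

open Finset

variable {α ι : Type*} [LinearOrder ι] (H : Hopping α ι)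

def downAll (σ : α) (S : Finset ι) : α :=
  if h : S.Nonempty then downAll (H.down σ (S.max' h)) (S.erase (S.max' h)) else σ
termination_by S.card
decreasing_by exact card_erase_lt_of_mem (S.max'_mem h)

def upAll (τ : α) (S : Finset ι) : α :=
  if h : S.Nonempty then H.up (upAll τ (S.erase (S.max' h))) (S.max' h) else τ
termination_by S.card
decreasing_by exact card_erase_lt_of_mem (S.max'_mem h)

variable {H} {σ τ : α} {a x : ι} {s S : Finset ι}

lemma asc_up (hx : x ∈ H.desc τ) : H.asc (H.up τ x) = insert x (H.asc τ) := by
  rw [← H.down_up hx, H.asc_down (H.mem_asc_up hx), insert_erase (H.mem_asc_up hx),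
    H.down_up hx]

lemma desc_up (hx : x ∈ H.desc τ) : H.desc (H.up τ x) = (H.desc τ).erase x := by
  conv_rhs => rw [← H.down_up hx, H.desc_down (H.mem_asc_up hx)]
  exact (erase_insert (H.notMem_desc_of_mem_asc (H.mem_asc_up hx))).symm

@[simp] lemma downAll_empty : H.downAll σ ∅ = σ := by
  rw [downAll]; simp

@[simp] lemma upAll_empty : H.upAll τ ∅ = τ := by
  rw [upAll]; simp

lemma downAll_insert (h : ∀ y ∈ s, y < a) :
    H.downAll σ (insert a s) = H.downAll (H.down σ a) s := by
  rw [downAll, dif_pos (insert_nonempty a s), max'_insert_of_forall_lt h,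
    erase_insert fun ha => (h a ha).false]

lemma upAll_insert (h : ∀ y ∈ s, y < a) : H.upAll τ (insert a s) = H.up (H.upAll τ s) a := by
  rw [upAll, dif_pos (insert_nonempty a s), max'_insert_of_forall_lt h,
    erase_insert fun ha => (h a ha).false]

lemma subset_asc_down (h : ∀ y ∈ s, y < a) (hS : insert a s ⊆ H.asc σ) :
    s ⊆ H.asc (H.down σ a) := by
  rw [H.asc_down (hS (mem_insert_self a s)), subset_erase]
  exact ⟨(subset_insert a s).trans hS, fun ha => (h a ha).false⟩

lemma asc_downAll (hS : S ⊆ H.asc σ) : H.asc (H.downAll σ S) = H.asc σ \ S := by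
  induction S using induction_on_max generalizing σ with
  | empty => simp
  | insert a s h ih =>
    rw [downAll_insert h, ih (subset_asc_down h hS), H.asc_down (hS (mem_insert_self a s)),
      sdiff_insert, erase_sdiff_comm]

lemma desc_downAll (hS : S ⊆ H.asc σ) : H.desc (H.downAll σ S) = H.desc σ ∪ S := by
  induction S using induction_on_max generalizing σ with
  | empty => simp
  | insert a s h ih =>
    rw [downAll_insert h, ih (subset_asc_down h hS), H.desc_down (hS (mem_insert_self a s)),
      union_insert, insert_union]

lemma upAll_downAll (hS : S ⊆ H.asc σ) : H.upAll (H.downAll σ S) S = σ := by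
  induction S using induction_on_max generalizing σ with
  | empty => simp
  | insert a s h ih =>
    rw [upAll_insert h, downAll_insert h, ih (subset_asc_down h hS),
      H.up_down (hS (mem_insert_self a s))]

lemma downAll_mem {P : Finset α} (hP : ∀ σ ∈ P, ∀ x ∈ H.asc σ, H.down σ x ∈ P) (hσ : σ ∈ P)
    (hS : S ⊆ H.asc σ) : H.downAll σ S ∈ P := by
  induction S using induction_on_max generalizing σ with
  | empty => simpa
  | insert a s h ih =>
    rw [downAll_insert h]
    exact ih (hP σ hσ a (hS (mem_insert_self a s))) (subset_asc_down h hS)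

lemma add_card_downAll {f : α → ℕ} (hf : ∀ σ x, x ∈ H.asc σ → f (H.down σ x) + 1 = f σ)
    (hS : S ⊆ H.asc σ) : f (H.downAll σ S) + #S = f σ := by
  induction S using induction_on_max generalizing σ with
  | empty => simp
  | insert a s h ih =>
    have ha := hS (mem_insert_self a s)
    rw [downAll_insert h, card_insert_of_notMem fun ha => (h a ha).false, ← add_assoc,
      ih (subset_asc_down h hS), hf σ a ha]

lemma desc_upAll (hS : S ⊆ H.desc τ) : H.desc (H.upAll τ S) = H.desc τ \ S := by
  induction S using induction_on_max with
  | empty => simp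
  | insert a s h ih =>
    have hs := (subset_insert a s).trans hS
    have ha : a ∈ H.desc (H.upAll τ s) := by
      rw [ih hs]; exact mem_sdiff.mpr ⟨hS (mem_insert_self a s), fun ha => (h a ha).false⟩
    rw [upAll_insert h, desc_up ha, ih hs, sdiff_insert]

lemma mem_desc_upAll (h : ∀ y ∈ s, y < a) (hS : insert a s ⊆ H.desc τ) :
    a ∈ H.desc (H.upAll τ s) := by
  rw [desc_upAll ((subset_insert a s).trans hS)]
  exact mem_sdiff.mpr ⟨hS (mem_insert_self a s), fun ha => (h a ha).false⟩

lemma asc_upAll (hS : S ⊆ H.desc τ) : H.asc (H.upAll τ S) = H.asc τ ∪ S := by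
  induction S using induction_on_max with
  | empty => simp
  | insert a s h ih =>
    rw [upAll_insert h, asc_up (mem_desc_upAll h hS), ih ((subset_insert a s).trans hS),
      union_insert]

lemma downAll_upAll (hS : S ⊆ H.desc τ) : H.downAll (H.upAll τ S) S = τ := by
  induction S using induction_on_max with
  | empty => simp
  | insert a s h ih =>
    rw [upAll_insert h, downAll_insert h, H.down_up (mem_desc_upAll h hS),
      ih ((subset_insert a s).trans hS)]

lemma upAll_mem {P : Finset α} (hP : ∀ τ ∈ P, ∀ x ∈ H.desc τ, H.up τ x ∈ P) (hτ : τ ∈ P)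
    (hS : S ⊆ H.desc τ) : H.upAll τ S ∈ P := by
  induction S using induction_on_max with
  | empty => simpa
  | insert a s h ih =>
    rw [upAll_insert h]
    exact hP _ (ih ((subset_insert a s).trans hS)) a (mem_desc_upAll h hS)

theorem sum_pow_eq_sum_pow_mul_one_add_pow {R : Type*} [CommSemiring R] (t : R) (P : Finset α)
    (f : α → ℕ) (hdown : ∀ σ ∈ P, ∀ x ∈ H.asc σ, H.down σ x ∈ P)
    (hup : ∀ τ ∈ P, ∀ x ∈ H.desc τ, H.up τ x ∈ P)
    (hf : ∀ σ x, x ∈ H.asc σ → f (H.down σ x) + 1 = f σ) :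
    ∑ σ ∈ P, t ^ f σ = ∑ τ ∈ P with H.asc τ = ∅, t ^ f τ * (1 + t) ^ #(H.desc τ) := by
  calc ∑ σ ∈ P, t ^ f σ
      = ∑ p ∈ (P.filter (H.asc · = ∅)).sigma (fun τ => (H.desc τ).powerset),
          t ^ (f p.1 + #p.2) := by
        refine sum_nbij' (fun σ => ⟨H.downAll σ (H.asc σ), H.asc σ⟩) (fun p => H.upAll p.1 p.2)
          ?_ ?_ ?_ ?_ ?_
        · intro σ hσ
          simp only [mem_sigma, mem_filter, mem_powerset]
          refine ⟨⟨downAll_mem hdown hσ subset_rfl, ?_⟩, ?_⟩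
          · rw [asc_downAll subset_rfl, Finset.sdiff_self]
          · rw [desc_downAll subset_rfl]; exact subset_union_right
        · rintro ⟨τ, S⟩ hp
          simp only [mem_sigma, mem_filter, mem_powerset] at hp
          exact upAll_mem hup hp.1.1 hp.2
        · intro σ _
          exact upAll_downAll subset_rfl
        · rintro ⟨τ, S⟩ hp
          simp only [mem_sigma, mem_filter, mem_powerset] at hp
          have hA : H.asc (H.upAll τ S) = S := by rw [asc_upAll hp.2, hp.1.2, empty_union]
          simp only [hA, downAll_upAll hp.2]
        · intro σ _
          exact congrArg (t ^ ·) (add_card_downAll hf subset_rfl).symm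
    _ = ∑ τ ∈ P with H.asc τ = ∅, t ^ f τ * (1 + t) ^ #(H.desc τ) := by
        rw [sum_sigma]
        refine sum_congr rfl fun τ _ => ?_
        rw [add_comm, ← sum_pow_mul_eq_add_pow, mul_sum]
        simp only [one_pow, mul_one, pow_add]

end Hopping

namespace Equiv.Perm

open Finset

variable {α : Type*}

lemma inv_apply_ne_self {σ : Perm α} (hσ : ∀ u, σ u ≠ u) (u : α) : σ⁻¹ u ≠ u :=
  fun h => hσ u (inv_eq_iff_eq.mp h).symm

variable [LinearOrder α] {σ : Perm α} {x : α}

/-- `sInf ∅ = 0`, but the set is nonempty as soon as `x < σ x`. -/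
noncomputable def backRun (σ : Perm α) (x : α) : ℕ := sInf {m | x < (σ⁻¹ ^ (m + 1)) x}

noncomputable def backAbove (σ : Perm α) (x : α) : α := (σ⁻¹ ^ (σ.backRun x + 1)) x

/-- Cuts `x` out of its cycle and reinserts it right after `σ.backAbove x`, the first letter
above `x` met when walking backwards from `x` along its cycle. -/
noncomputable def hopDown (σ : Perm α) (x : α) : Perm α :=
  σ * swap x (σ⁻¹ x) * swap x (σ.backAbove x)

noncomputable def hopUp (σ : Perm α) (x : α) : Perm α := (σ⁻¹.hopDown x)⁻¹

lemma backRun_eq_of {k : ℕ} (hk : x < (σ⁻¹ ^ (k + 1)) x)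
    (hmin : ∀ m < k, ¬ x < (σ⁻¹ ^ (m + 1)) x) : σ.backRun x = k :=
  le_antisymm (Nat.sInf_le hk) (not_lt.mp fun h =>
    hmin _ h (Nat.sInf_mem (s := {m | x < (σ⁻¹ ^ (m + 1)) x}) ⟨k, hk⟩))

lemma apply_backAbove : σ (σ.backAbove x) = (σ⁻¹ ^ σ.backRun x) x := by
  rw [backAbove, pow_succ', mul_apply]
  exact σ.apply_symm_apply _

lemma inv_pow_succ_apply_lt (h₁ : σ⁻¹ x < x) (h₂ : x < σ x) {j : ℕ} (hj : j < σ.backRun x) :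
    (σ⁻¹ ^ (j + 1)) x < x := by
  induction j with
  | zero => simpa using h₁
  | succ j ih =>
    have hle : ¬ x < (σ⁻¹ ^ (j + 1 + 1)) x := Nat.notMem_of_lt_sInf hj
    refine lt_of_le_of_ne (not_lt.mp hle) fun heq => (ih (by omega)).not_gt ?_
    rw [pow_succ' _ (j + 1), mul_apply, inv_eq_iff_eq] at heq
    exact heq ▸ h₂

lemma hopDown_apply_backAbove : σ.hopDown x (σ.backAbove x) = x := by
  simp [hopDown]

lemma hopDown_apply_of_ne {u : α} (hx : u ≠ x) (hy : u ≠ σ.backAbove x) (hw : u ≠ σ⁻¹ x) :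
    σ.hopDown x u = σ u := by
  rw [hopDown, mul_apply, mul_apply, swap_apply_of_ne_of_ne hx hy, swap_apply_of_ne_of_ne hx hw]

section Finite

variable [Finite α]

lemma exists_lt_inv_pow_succ_apply (h : x < σ x) : ∃ m, x < (σ⁻¹ ^ (m + 1)) x := by
  obtain ⟨_ | m, hpos, -, hm⟩ := ((SameCycle.refl σ x).apply_right).inv.exists_pow_eq''
  · exact absurd hpos (lt_irrefl 0)
  · exact ⟨m, hm ▸ h⟩

lemma lt_backAbove (h : x < σ x) : x < σ.backAbove x :=
  Nat.sInf_mem (exists_lt_inv_pow_succ_apply h)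

lemma backRun_pos (h₁ : σ⁻¹ x < x) (h₂ : x < σ x) : 0 < σ.backRun x := by
  refine Nat.pos_of_ne_zero fun h => (lt_backAbove h₂).not_gt ?_
  simpa [backAbove, h] using h₁

lemma apply_backAbove_lt (h₁ : σ⁻¹ x < x) (h₂ : x < σ x) : σ (σ.backAbove x) < x := by
  have hK := backRun_pos h₁ h₂
  rw [apply_backAbove, ← Nat.sub_add_cancel hK]
  exact inv_pow_succ_apply_lt h₁ h₂ (by omega)

lemma hopDown_apply_self (h₁ : σ⁻¹ x < x) (h₂ : x < σ x) :
    σ.hopDown x x = σ (σ.backAbove x) := by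
  have hy := lt_backAbove h₂
  rw [hopDown, mul_apply, mul_apply, swap_apply_left,
    swap_apply_of_ne_of_ne hy.ne' (h₁.trans hy).ne']

lemma hopDown_apply_inv_self (h₁ : σ⁻¹ x < x) (h₂ : x < σ x) :
    σ.hopDown x (σ⁻¹ x) = σ x := by
  have hy := lt_backAbove h₂
  rw [hopDown, mul_apply, mul_apply, swap_apply_of_ne_of_ne h₁.ne (h₁.trans hy).ne,
    swap_apply_right]

lemma cmp_hopDown (h₁ : σ⁻¹ x < x) (h₂ : x < σ x) {u : α} (hu : u ≠ x) :
    cmp u (σ.hopDown x u) = cmp u (σ u) := by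
  have hy := lt_backAbove h₂
  have hc := apply_backAbove_lt h₁ h₂
  by_cases huy : u = σ.backAbove x
  · subst huy
    rw [hopDown_apply_backAbove, (cmp_eq_gt_iff _ _).mpr hy,
      (cmp_eq_gt_iff _ _).mpr (hc.trans hy)]
  by_cases huw : u = σ⁻¹ x
  · subst huw
    rw [hopDown_apply_inv_self h₁ h₂, (cmp_eq_lt_iff _ _).mpr (h₁.trans h₂)]
    simp only [coe_inv, apply_symm_apply]
    exact ((cmp_eq_lt_iff _ _).mpr h₁).symm
  rw [hopDown_apply_of_ne hu huy huw]

lemma cmp_hopDown_inv (h₁ : σ⁻¹ x < x) (h₂ : x < σ x) {u : α} (hu : u ≠ x) :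
    cmp u ((σ.hopDown x)⁻¹ u) = cmp u (σ⁻¹ u) := by
  have hy := lt_backAbove h₂
  have hc := apply_backAbove_lt h₁ h₂
  by_cases huc : u = σ (σ.backAbove x)
  · subst huc
    rw [inv_eq_iff_eq.mpr (hopDown_apply_self h₁ h₂).symm, (cmp_eq_lt_iff _ _).mpr hc]
    simp only [coe_inv, symm_apply_apply]
    exact ((cmp_eq_lt_iff _ _).mpr (hc.trans hy)).symm
  by_cases hux : u = σ x
  · subst hux
    rw [inv_eq_iff_eq.mpr (hopDown_apply_inv_self h₁ h₂).symm,
      (cmp_eq_gt_iff _ _).mpr (h₁.trans h₂)]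
    simp only [coe_inv, symm_apply_apply]
    exact ((cmp_eq_gt_iff _ _).mpr h₂).symm
  have hv : (σ.hopDown x)⁻¹ u = σ⁻¹ u := by
    rw [inv_eq_iff_eq, hopDown_apply_of_ne]
    · simp
    · exact fun h => hux (by simp [← h])
    · exact fun h => huc (by simp [← h])
    · exact fun h => hu (by simpa using h)
  rw [hv]

lemma hopDown_pow_succ_apply (h₁ : σ⁻¹ x < x) (h₂ : x < σ x) {j : ℕ} (hj : j < σ.backRun x) :
    (σ.hopDown x ^ (j + 1)) x = (σ⁻¹ ^ (σ.backRun x - j)) x := by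
  induction j with
  | zero => rw [zero_add, pow_one, Nat.sub_zero, hopDown_apply_self h₁ h₂, apply_backAbove]
  | succ j ih =>
    obtain ⟨i, hi⟩ : ∃ i, σ.backRun x - j = i + 1 + 1 := ⟨σ.backRun x - j - 2, by omega⟩
    have hlt : (σ⁻¹ ^ (i + 1 + 1)) x < x := inv_pow_succ_apply_lt h₁ h₂ (by omega)
    have hne : (σ⁻¹ ^ (i + 1 + 1)) x ≠ σ⁻¹ x := fun h => by
      rw [pow_succ', mul_apply, (σ⁻¹).injective.eq_iff] at h
      exact (inv_pow_succ_apply_lt h₁ h₂ (j := i) (by omega)).ne h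
    rw [pow_succ', mul_apply, ih (by omega), hi,
      hopDown_apply_of_ne hlt.ne (hlt.trans (lt_backAbove h₂)).ne hne, pow_succ' _ (i + 1),
      mul_apply, show σ.backRun x - (j + 1) = i + 1 by omega]
    simp

lemma hopDown_pow_apply_backRun_succ (h₁ : σ⁻¹ x < x) (h₂ : x < σ x) :
    (σ.hopDown x ^ (σ.backRun x + 1)) x = σ x := by
  have hK := backRun_pos h₁ h₂
  have h := hopDown_pow_succ_apply h₁ h₂ (j := σ.backRun x - 1) (by omega)
  rw [Nat.sub_add_cancel hK, Nat.sub_sub_self hK, pow_one] at h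
  rw [pow_succ', mul_apply, h, hopDown_apply_inv_self h₁ h₂]

lemma backAbove_inv_hopDown (h₁ : σ⁻¹ x < x) (h₂ : x < σ x) :
    (σ.hopDown x)⁻¹.backAbove x = σ x := by
  have hK : (σ.hopDown x)⁻¹.backRun x = σ.backRun x := by
    refine backRun_eq_of ?_ fun m hm => ?_ <;> rw [inv_inv]
    · rw [hopDown_pow_apply_backRun_succ h₁ h₂]
      exact h₂
    · rw [hopDown_pow_succ_apply h₁ h₂ hm,
        show σ.backRun x - m = σ.backRun x - m - 1 + 1 by omega]
      exact (inv_pow_succ_apply_lt h₁ h₂ (by omega)).not_gt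
  rw [backAbove, hK, inv_inv, hopDown_pow_apply_backRun_succ h₁ h₂]

lemma hopDown_inv_hopDown (h₁ : σ⁻¹ x < x) (h₂ : x < σ x) :
    (σ.hopDown x)⁻¹.hopDown x = σ⁻¹ := by
  have hy := lt_backAbove h₂
  set y := σ.backAbove x
  calc (σ.hopDown x)⁻¹.hopDown x
      = swap x y * swap x (σ⁻¹ x) * σ⁻¹ * swap x (σ y) * swap x (σ x) := by
        rw [hopDown, inv_inv, backAbove_inv_hopDown h₁ h₂, hopDown_apply_self h₁ h₂, hopDown,
          mul_inv_rev, mul_inv_rev, swap_inv, swap_inv]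
        simp only [y, mul_assoc]
    _ = swap x y * (swap x (σ⁻¹ x) * swap (σ⁻¹ x) y * swap (σ⁻¹ x) x) * σ⁻¹ := by
        simp only [mul_assoc, mul_swap_eq_swap_mul σ⁻¹, coe_inv, symm_apply_apply]
    _ = σ⁻¹ := by
        rw [swap_comm x (σ⁻¹ x), swap_comm (σ⁻¹ x) y,
          swap_mul_swap_mul_swap (h₁.trans hy).ne' hy.ne', swap_mul_self, one_mul]

end Finite

section Fintype

variable [Fintype α]

def cyclicDoubleAscents (σ : Perm α) : Finset α := {u | σ⁻¹ u < u ∧ u < σ u}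

def cyclicDoubleDescents (σ : Perm α) : Finset α := {u | σ u < u ∧ u < σ⁻¹ u}

lemma mem_cyclicDoubleAscents : x ∈ σ.cyclicDoubleAscents ↔ σ⁻¹ x < x ∧ x < σ x := by
  simp [cyclicDoubleAscents]

lemma mem_cyclicDoubleDescents : x ∈ σ.cyclicDoubleDescents ↔ σ x < x ∧ x < σ⁻¹ x := by
  simp [cyclicDoubleDescents]

@[simp] lemma cyclicDoubleAscents_inv (σ : Perm α) :
    σ⁻¹.cyclicDoubleAscents = σ.cyclicDoubleDescents := by
  ext u; simp [mem_cyclicDoubleAscents, mem_cyclicDoubleDescents, and_comm]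

@[simp] lemma cyclicDoubleDescents_inv (σ : Perm α) :
    σ⁻¹.cyclicDoubleDescents = σ.cyclicDoubleAscents := by
  ext u; simp [mem_cyclicDoubleAscents, mem_cyclicDoubleDescents, and_comm]

lemma cyclicDoubleAscents_hopDown (hx : x ∈ σ.cyclicDoubleAscents) :
    (σ.hopDown x).cyclicDoubleAscents = σ.cyclicDoubleAscents.erase x := by
  obtain ⟨h₁, h₂⟩ := mem_cyclicDoubleAscents.mp hx
  ext u
  rw [mem_erase, mem_cyclicDoubleAscents, mem_cyclicDoubleAscents]
  rcases eq_or_ne u x with rfl | hu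
  · simp only [ne_eq, not_true_eq_false, false_and, iff_false, not_and]
    rw [hopDown_apply_self h₁ h₂]
    exact fun _ => (apply_backAbove_lt h₁ h₂).not_gt
  · rw [lt_iff_lt_of_cmp_eq_cmp (cmp_hopDown h₁ h₂ hu),
      lt_iff_lt_of_cmp_eq_cmp (cmp_eq_cmp_symm.mp (cmp_hopDown_inv h₁ h₂ hu))]
    exact ⟨fun h => ⟨hu, h⟩, fun h => h.2⟩

lemma cyclicDoubleDescents_hopDown (hx : x ∈ σ.cyclicDoubleAscents) :
    (σ.hopDown x).cyclicDoubleDescents = insert x σ.cyclicDoubleDescents := by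
  obtain ⟨h₁, h₂⟩ := mem_cyclicDoubleAscents.mp hx
  ext u
  rw [mem_insert, mem_cyclicDoubleDescents, mem_cyclicDoubleDescents]
  rcases eq_or_ne u x with rfl | hu
  · rw [hopDown_apply_self h₁ h₂, inv_eq_iff_eq.mpr hopDown_apply_backAbove.symm]
    exact iff_of_true ⟨apply_backAbove_lt h₁ h₂, lt_backAbove h₂⟩ (Or.inl rfl)
  · rw [lt_iff_lt_of_cmp_eq_cmp (cmp_hopDown_inv h₁ h₂ hu),
      lt_iff_lt_of_cmp_eq_cmp (cmp_eq_cmp_symm.mp (cmp_hopDown h₁ h₂ hu))]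
    exact ⟨Or.inr, fun h => h.resolve_left hu⟩

lemma filter_lt_hopDown (hx : x ∈ σ.cyclicDoubleAscents) :
    ({u | u < σ.hopDown x u} : Finset α) = ({u | u < σ u} : Finset α).erase x := by
  obtain ⟨h₁, h₂⟩ := mem_cyclicDoubleAscents.mp hx
  ext u
  rw [mem_erase, mem_filter_univ, mem_filter_univ]
  rcases eq_or_ne u x with rfl | hu
  · rw [hopDown_apply_self h₁ h₂]
    exact iff_of_false (apply_backAbove_lt h₁ h₂).not_gt fun h => h.1 rfl
  · rw [lt_iff_lt_of_cmp_eq_cmp (cmp_hopDown h₁ h₂ hu)]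
    exact ⟨fun h => ⟨hu, h⟩, fun h => h.2⟩

lemma hopDown_apply_ne_self (hx : x ∈ σ.cyclicDoubleAscents) (hσ : ∀ u, σ u ≠ u) (u : α) :
    σ.hopDown x u ≠ u := by
  obtain ⟨h₁, h₂⟩ := mem_cyclicDoubleAscents.mp hx
  rcases eq_or_ne u x with rfl | hu
  · rw [hopDown_apply_self h₁ h₂]
    exact (apply_backAbove_lt h₁ h₂).ne
  · rw [ne_comm, ne_eq, eq_iff_eq_of_cmp_eq_cmp (cmp_hopDown h₁ h₂ hu)]
    exact (hσ u).symm

lemma mem_cyclicDoubleDescents_hopUp (hx : x ∈ σ.cyclicDoubleDescents) :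
    x ∈ (σ.hopUp x).cyclicDoubleAscents := by
  rw [hopUp, cyclicDoubleAscents_inv, cyclicDoubleDescents_hopDown (by simpa using hx)]
  exact mem_insert_self x _

lemma hopUp_hopDown (hx : x ∈ σ.cyclicDoubleAscents) : (σ.hopDown x).hopUp x = σ := by
  obtain ⟨h₁, h₂⟩ := mem_cyclicDoubleAscents.mp hx
  rw [hopUp, hopDown_inv_hopDown h₁ h₂, inv_inv]

lemma hopDown_hopUp (hx : x ∈ σ.cyclicDoubleDescents) : (σ.hopUp x).hopDown x = σ := by
  obtain ⟨h₁, h₂⟩ := mem_cyclicDoubleAscents.mp (σ.cyclicDoubleAscents_inv ▸ hx)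
  rw [hopUp, hopDown_inv_hopDown h₁ h₂, inv_inv]

lemma hopUp_apply_ne_self (hx : x ∈ σ.cyclicDoubleDescents) (hσ : ∀ u, σ u ≠ u) (u : α) :
    σ.hopUp x u ≠ u :=
  inv_apply_ne_self (hopDown_apply_ne_self (by simpa using hx) (inv_apply_ne_self hσ)) u

variable (α) in
noncomputable def cyclicHopping : Hopping (Perm α) α where
  asc := cyclicDoubleAscents
  desc := cyclicDoubleDescents
  down := hopDown
  up := hopUp
  asc_down := cyclicDoubleAscents_hopDown
  desc_down := cyclicDoubleDescents_hopDown
  notMem_desc_of_mem_asc hx hx' :=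
    (mem_cyclicDoubleAscents.mp hx).2.not_gt (mem_cyclicDoubleDescents.mp hx').1
  mem_asc_up := mem_cyclicDoubleDescents_hopUp
  down_up := hopDown_hopUp
  up_down := hopUp_hopDown

lemma card_lt_apply_add_card_lt_inv_apply (hσ : ∀ u, σ u ≠ u) :
    #{u | u < σ u} + #{u | u < σ⁻¹ u} = Fintype.card α := by
  have hinv : #{u | u < σ⁻¹ u} = #{u | ¬ u < σ u} :=
    card_equiv σ⁻¹ fun u => by
      simp only [mem_filter_univ, not_lt, coe_inv, apply_symm_apply]
      exact ⟨fun h => h.le, fun h => h.lt_of_ne (by simpa [eq_comm] using inv_apply_ne_self hσ u)⟩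
  rw [hinv, card_filter_add_card_filter_not, card_univ]

lemma card_lt_apply_eq (hσ : ∀ u, σ u ≠ u) :
    #{u | u < σ u} = #{u | u < σ u ∧ u < σ⁻¹ u} + #σ.cyclicDoubleAscents := by
  rw [← card_filter_add_card_filter_not (s := {u | u < σ u}) (fun u => u < σ⁻¹ u), filter_filter,
    filter_filter]
  congr 2
  ext u
  simp only [mem_filter_univ, mem_cyclicDoubleAscents, not_lt]
  exact ⟨fun h => ⟨h.2.lt_of_ne (inv_apply_ne_self hσ u), h.1⟩, fun h => ⟨h.2, h.1.le⟩⟩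

theorem card_cyclicDoubleDescents_add_two_mul (hσ : ∀ u, σ u ≠ u) :
    #σ.cyclicDoubleDescents + 2 * #{u | u < σ u} = Fintype.card α + #σ.cyclicDoubleAscents := by
  have hexc := card_lt_apply_eq hσ
  have hexc_inv := card_lt_apply_eq (inv_apply_ne_self hσ)
  have hsum := card_lt_apply_add_card_lt_inv_apply hσ
  simp only [inv_inv, cyclicDoubleAscents_inv, and_comm] at hexc_inv
  omega

end Fintype

end Equiv.Perm

theorem Nat.choose_le_choose_of_le_of_two_mul_le {m a b : ℕ} (hab : a ≤ b) (hb : 2 * b ≤ m) :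
    m.choose a ≤ m.choose b := by
  induction b, hab using Nat.le_induction with
  | base => exact le_rfl
  | succ b hab ih => exact (ih (by omega)).trans (Nat.choose_le_succ_of_lt_half_left (by omega))

open Polynomial Finset

section Gamma

variable (R : Type*) [Semiring R]

noncomputable def gammaPoly (n : ℕ) (c : ℕ → ℕ) : R[X] :=
  ∑ k ∈ range (n / 2 + 1), (c k : R[X]) * X ^ k * (1 + X) ^ (n - 2 * k)

lemma coeff_gammaPoly (n : ℕ) (c : ℕ → ℕ) (j : ℕ) :
    (gammaPoly R n c).coeff j =
      ((∑ k ∈ range (n / 2 + 1), if k ≤ j then c k * (n - 2 * k).choose (j - k) else 0 : ℕ) :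
        R) := by
  rw [gammaPoly, finsetSum_coeff, Nat.cast_sum]
  refine sum_congr rfl fun k _ => ?_
  rw [mul_assoc, coeff_natCast_mul, coeff_X_pow_mul']
  split_ifs <;> simp [coeff_one_add_X_pow]

variable {R}

lemma coeff_gammaPoly_sub (n : ℕ) (c : ℕ → ℕ) {j : ℕ} (hj : j ≤ n) :
    (gammaPoly R n c).coeff (n - j) = (gammaPoly R n c).coeff j := by
  rw [coeff_gammaPoly, coeff_gammaPoly]
  congr 1
  refine sum_congr rfl fun k hk => ?_
  have hk : 2 * k ≤ n := by have := mem_range.mp hk; omega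
  split_ifs with h₁ h₂ h₂
  · rw [Nat.choose_symm_of_eq_add (by omega : n - 2 * k = (n - j - k) + (j - k))]
  · rw [Nat.choose_eq_zero_of_lt (by omega : n - 2 * k < n - j - k), mul_zero]
  · rw [Nat.choose_eq_zero_of_lt (by omega : n - 2 * k < j - k), mul_zero]
  · rfl

lemma coeff_gammaPoly_mono [PartialOrder R] [IsOrderedRing R] (n : ℕ) (c : ℕ → ℕ) {j l : ℕ}
    (hjl : j ≤ l) (hl : l ≤ n / 2) : (gammaPoly R n c).coeff j ≤ (gammaPoly R n c).coeff l := by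
  rw [coeff_gammaPoly, coeff_gammaPoly]
  refine Nat.mono_cast (sum_le_sum fun k _ => ?_)
  split_ifs with h₁ h₂ h₂
  · exact Nat.mul_le_mul_left _ (Nat.choose_le_choose_of_le_of_two_mul_le (by omega) (by omega))
  · omega
  · exact Nat.zero_le _
  · rfl

end Gamma

section Derangements

open Equiv Equiv.Perm

variable {n : ℕ}

lemma mem_Der {σ : Perm (Fin n)} : σ ∈ Der n ↔ ∀ u, σ u ≠ u := by simp [Der]

lemma cdaN_eq_card (σ : Perm (Fin n)) : cdaN σ = #σ.cyclicDoubleAscents :=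
  card_equiv σ fun i => by simp [mem_cyclicDoubleAscents]

lemma excN_hopDown {σ : Perm (Fin n)} {x : Fin n} (hx : x ∈ σ.cyclicDoubleAscents) :
    excN (σ.hopDown x) + 1 = excN σ := by
  rw [excN, excN, filter_lt_hopDown hx, card_erase_add_one]
  simpa using (mem_cyclicDoubleAscents.mp hx).2

lemma card_cyclicDoubleDescents_add_two_mul_excN {σ : Perm (Fin n)} (hσ : σ ∈ Der n) :
    #σ.cyclicDoubleDescents + 2 * excN σ = n + cdaN σ := by
  simpa [cdaN_eq_card, excN] using card_cyclicDoubleDescents_add_two_mul (mem_Der.mp hσ)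

theorem derPoly_eq_sum_filter (n : ℕ) :
    derPoly n = ∑ τ ∈ Der n with cdaN τ = 0, X ^ excN τ * (1 + X) ^ (n - 2 * excN τ) := by
  rw [derPoly, (cyclicHopping (Fin n)).sum_pow_eq_sum_pow_mul_one_add_pow X (Der n) excN
    (fun σ hσ x hx => mem_Der.mpr (hopDown_apply_ne_self hx (mem_Der.mp hσ)))
    (fun τ hτ x hx => mem_Der.mpr (hopUp_apply_ne_self hx (mem_Der.mp hτ)))
    (fun σ x hx => excN_hopDown hx)]
  refine sum_congr (filter_congr fun τ _ => by rw [cdaN_eq_card, card_eq_zero]; rfl) fun τ hτ => ?_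
  obtain ⟨hτ, hcda⟩ := mem_filter.mp hτ
  have := card_cyclicDoubleDescents_add_two_mul_excN hτ
  congr 2
  exact (by omega : #τ.cyclicDoubleDescents = n - 2 * excN τ)

theorem derPoly_eq_gammaPoly (n : ℕ) : derPoly n = gammaPoly ℤ n fun k => #(DEset n k) := by
  have hmaps : ∀ τ ∈ {τ ∈ Der n | cdaN τ = 0}, excN τ ∈ range (n / 2 + 1) := fun τ hτ => by
    obtain ⟨hτ, hcda⟩ := mem_filter.mp hτ
    have := card_cyclicDoubleDescents_add_two_mul_excN hτ
    rw [mem_range]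
    omega
  rw [derPoly_eq_sum_filter, gammaPoly, ← sum_fiberwise_of_maps_to hmaps]
  refine sum_congr rfl fun k _ => ?_
  rw [sum_congr rfl fun τ hτ => by rw [(mem_filter.mp hτ).2], sum_const, nsmul_eq_mul, mul_assoc,
    filter_filter, DEset]
  simp only [and_comm]

end Derangements

theorem stmt4_general (n : ℕ) :
    derPoly n =
      (∑ k ∈ Finset.range (n / 2 + 1),
        ((DEset n k).card : Polynomial ℤ) * Polynomial.X ^ k *
          (1 + Polynomial.X) ^ (n - 2 * k)) ∧
    (∀ j ≤ n, (derPoly n).coeff j = (derPoly n).coeff (n - j)) ∧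
    (∀ j k, j ≤ k → k ≤ n / 2 → (derPoly n).coeff j ≤ (derPoly n).coeff k) := by
  have h := derPoly_eq_gammaPoly n
  refine ⟨h, fun j hj => ?_, fun j k hjk hk => ?_⟩ <;> rw [h]
  · exact (coeff_gammaPoly_sub n _ hj).symm
  · exact coeff_gammaPoly_mono n _ hjk hk

theorem stmt4 (n : ℕ) (hn : 1 ≤ n) :
    derPoly n =
      (∑ k ∈ Finset.range (n / 2 + 1),
        ((DEset n k).card : Polynomial ℤ) * Polynomial.X ^ k *
          (1 + Polynomial.X) ^ (n - 2 * k)) ∧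
    (∀ j ≤ n, (derPoly n).coeff j = (derPoly n).coeff (n - j)) ∧
    (∀ j k, j ≤ k → k ≤ n / 2 → (derPoly n).coeff j ≤ (derPoly n).coeff k) :=
  stmt4_general n
end

section
/- For all 0 ≤ k ≤ n, ĝ_{n,k} = Σ_{i=0}^{k} γ_{n,i}^{(2)} · 2^{k-i} · C(n-i, k-i), where ĝ_{n,k} counts drop-colored permutations of [n] without double excedance whose total number of weak excedances and colored drops is k, γ_{n,i}^{(2)} counts permutations of [n] with i weak excedances and no double excedance, and C denotes binomial coefficients. -/
/-!
Forgetting the colours sends a drop-coloured permutation to a permutation `τ` without double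
excedance. The fibre over `τ` is the set of ways to pick `k - wex τ` of the `n - wex τ` drops of
`τ` and give each of them one of two colours, so it has `C(n - wex τ, k - wex τ) · 2^(k - wex τ)`
elements; grouping the permutations `τ` by `wex τ = i` gives the formula.
-/

open Finset

section SupportCount

variable {α β : Type*} [Fintype α] [DecidableEq α] [Fintype β] [DecidableEq β]

theorem card_filter_support_eq (b : β) (S : Finset α) :
    #{c : α → β | ({i | c i ≠ b} : Finset α) = S} = (Fintype.card β - 1) ^ #S := by
  have hfiber : ({c : α → β | ({i | c i ≠ b} : Finset α) = S} : Finset (α → β)) =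
      Fintype.piFinset fun i => if i ∈ S then univ.erase b else {b} := by
    ext c
    simp only [mem_filter, mem_univ, true_and, Fintype.mem_piFinset, Finset.ext_iff]
    refine forall_congr' fun i => ?_
    split_ifs with hi <;> simp [hi]
  rw [hfiber, Fintype.card_piFinset]
  simp only [apply_ite card, card_erase_of_mem (mem_univ b), card_univ, card_singleton]
  rw [prod_ite_mem, univ_inter, prod_const]

theorem card_filter_support_subset_card_eq (b : β) (D : Finset α) (m : ℕ) :
    #{c : α → β | (∀ i, c i ≠ b → i ∈ D) ∧ #{i | c i ≠ b} = m} =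
      (#D).choose m * (Fintype.card β - 1) ^ m := by
  rw [card_eq_sum_card_fiberwise (f := fun c => ({i | c i ≠ b} : Finset α))
    (t := D.powersetCard m)]
  · rw [← card_powersetCard m D, card_eq_sum_ones, sum_mul, one_mul]
    refine sum_congr rfl fun S hS => ?_
    obtain ⟨hSD, hSm⟩ := mem_powersetCard.mp hS
    rw [← hSm, ← card_filter_support_eq b S, filter_filter]
    congr 1
    refine filter_congr fun c _ => ⟨And.right, fun hc => ⟨⟨fun i hi => hSD ?_, ?_⟩, hc⟩⟩
    · simpa [← hc] using hi
    · rw [hc]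
  · intro c hc
    simp only [coe_filter, mem_univ, true_and, Set.mem_ofPred_eq] at hc
    exact mem_powersetCard.mpr ⟨fun i hi => hc.1 i (mem_filter.mp hi).2, hc.2⟩

end SupportCount

theorem wexN_add_dropN {n : ℕ} (σ : Equiv.Perm (Fin n)) : wexN σ + dropN σ = n := by
  simpa [wexN, dropN] using
    card_filter_add_card_filter_not (s := univ) (p := fun i : Fin n => i ≤ σ i)

theorem card_drop_colorings {n : ℕ} (τ : Equiv.Perm (Fin n)) (m : ℕ) :
    #{c : Fin n → Fin 3 | (∀ i, (c i : ℕ) ≠ 0 → τ i < i) ∧ #{i | (c i : ℕ) ≠ 0} = m} =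
      (n - wexN τ).choose m * 2 ^ m := by
  have hdrop : dropN τ = n - wexN τ := by have := wexN_add_dropN τ; omega
  simp only [Fin.val_ne_zero_iff]
  rw [← hdrop, dropN]
  simpa using card_filter_support_subset_card_eq (0 : Fin 3) {i | τ i < i} m

theorem card_ghat_fiber {n k : ℕ} (τ : Equiv.Perm (Fin n)) (hτ : cdaN τ = 0)
    (hwex : wexN τ ≤ k) :
    #{σ ∈ {σ ∈ DCset n | wexN σ.1 + cdropN σ = k} | σ.1 = τ} =
      (n - wexN τ).choose (k - wexN τ) * 2 ^ (k - wexN τ) := by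
  have hfiber : {σ ∈ {σ ∈ DCset n | wexN σ.1 + cdropN σ = k} | σ.1 = τ} =
      ({τ} : Finset _) ×ˢ ({c : Fin n → Fin 3 | (∀ i, (c i : ℕ) ≠ 0 → τ i < i) ∧
        #{i | (c i : ℕ) ≠ 0} = k - wexN τ} : Finset _) := by
    ext ⟨τ', c⟩
    rw [mem_filter, mem_filter, mem_product, mem_singleton, mem_filter]
    simp only [DCset, cdropN, mem_filter, mem_univ, true_and]
    constructor
    · rintro ⟨⟨⟨-, hc⟩, hk⟩, rfl⟩
      exact ⟨rfl, hc, by omega⟩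
    · rintro ⟨rfl, hc, hm⟩
      exact ⟨⟨⟨hτ, hc⟩, by omega⟩, rfl⟩
  rw [hfiber, card_product, card_singleton, one_mul, card_drop_colorings]

theorem stmt14_general (n k : ℕ) :
    ghat n k = ∑ i ∈ Finset.range (k + 1),
      gam2 n i * 2 ^ (k - i) * (n - i).choose (k - i) := by
  set T : Finset (Equiv.Perm (Fin n)) := {τ | cdaN τ = 0 ∧ wexN τ ≤ k}
  have hfst : ∀ σ ∈ (DCset n).filter fun σ => wexN σ.1 + cdropN σ = k, σ.1 ∈ T := by
    intro σ hσ
    simp only [DCset, mem_filter, mem_univ, true_and] at hσ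
    simp only [T, mem_filter, mem_univ, true_and]
    exact ⟨hσ.1.1, by omega⟩
  have hwex : ∀ τ ∈ T, wexN τ ∈ range (k + 1) := fun τ hτ =>
    mem_range.mpr (Nat.lt_succ_of_le (mem_filter.mp hτ).2.2)
  rw [ghat, card_eq_sum_card_fiberwise hfst, ← sum_fiberwise_of_maps_to hwex]
  refine sum_congr rfl fun i hi => ?_
  have hgam : #{τ ∈ T | wexN τ = i} = gam2 n i := by
    simp only [T, gam2, filter_filter]
    congr 1
    refine filter_congr fun τ _ => ?_
    have := mem_range.mp hi
    constructor <;> intro h <;> refine ⟨?_, ?_⟩ <;> omega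
  calc ∑ τ ∈ T with wexN τ = i, #{σ ∈ {σ ∈ DCset n | wexN σ.1 + cdropN σ = k} | σ.1 = τ}
      = ∑ τ ∈ T with wexN τ = i, (n - i).choose (k - i) * 2 ^ (k - i) := by
        refine sum_congr rfl fun τ hτ => ?_
        obtain ⟨hτT, rfl⟩ := mem_filter.mp hτ
        obtain ⟨hcda, hle⟩ := (mem_filter.mp hτT).2
        exact card_ghat_fiber τ hcda hle
    _ = gam2 n i * 2 ^ (k - i) * (n - i).choose (k - i) := by
        rw [sum_const, hgam, smul_eq_mul]
        ring

theorem stmt14 (n k : ℕ) (hk : k ≤ n) :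
    ghat n k = ∑ i ∈ Finset.range (k + 1),
      gam2 n i * 2 ^ (k - i) * (n - i).choose (k - i) :=
  stmt14_general n k
end

section
/- For every permutation σ ∈ S_n, inv σ = drop σ + cros σ + 2·nest σ, where drop σ = #{i : σ(i) < i}, cros σ = #{(i,j) : (i < j ≤ σ(i) < σ(j)) or (i > j > σ(i) > σ(j))}, and nest σ = #{(i,j) : (i < j ≤ σ(j) < σ(i)) or (i > j > σ(j) > σ(i))}. -/
open Finset

/-!
Think of `i ↦ σ i` as an arc, going up when `i ≤ σ i` and down when `σ i < i`. In an inversion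
`a < b`, `σ b < σ a`, two arcs going up or two arcs going down form a nesting; the remaining
inversions pair an up-arc at `a` with a down-arc at `b`. These are counted by the cut principle:
since `σ` is a bijection, for every threshold `t` as many arcs cross `t` upwards as downwards.
Applied at `t = a` when `σ b < a`, it turns these pairs into upper nestings and crossings; applied
just above `σ b` when `a ≤ σ b`, into lower nestings, lower crossings and the drop at `b` itself.
So every nesting is counted twice.
-/

section PairCounting

variable {α β : Type*} [Fintype α] [Fintype β]

theorem card_filter_prod_comm (P : α × β → Prop) [DecidablePred P] :
    #{x | P x} = #{x : β × α | P x.swap} :=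
  card_equiv (Equiv.prodComm α β) (by simp)

theorem card_filter_prod_congr_fst {P Q : α × β → Prop} [DecidablePred P] [DecidablePred Q]
    (h : ∀ a, #{b | P (a, b)} = #{b | Q (a, b)}) : #{x | P x} = #{x | Q x} := by
  simp only [card_filter, Fintype.sum_prod_type] at h ⊢
  exact sum_congr rfl fun a _ => h a

theorem card_filter_prod_congr_snd {P Q : α × β → Prop} [DecidablePred P] [DecidablePred Q]
    (h : ∀ b, #{a | P (a, b)} = #{a | Q (a, b)}) : #{x | P x} = #{x | Q x} := by
  simp only [card_filter, Fintype.sum_prod_type_right] at h ⊢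
  exact sum_congr rfl fun b _ => h b

theorem card_filter_prod_diag [DecidableEq α] (P : α → Prop) [DecidablePred P] :
    #{x : α × α | x.1 = x.2 ∧ P x.2} = #{a | P a} := by
  apply card_nbij' Prod.snd (fun a => (a, a)) <;> intro x <;> aesop

end PairCounting

namespace Equiv.Perm

variable {α : Type*} [Fintype α]

theorem card_filter_and_not_apply_eq (σ : Perm α) (p : α → Prop) [DecidablePred p] :
    #{c | p c ∧ ¬p (σ c)} = #{c | ¬p c ∧ p (σ c)} := by
  have h : ∑ c, ((if p c ∧ ¬p (σ c) then 1 else 0) + if p (σ c) then 1 else 0) =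
      ∑ c, ((if ¬p c ∧ p (σ c) then 1 else 0) + if p c then 1 else 0) :=
    sum_congr rfl fun c _ => by split_ifs <;> tauto
  rw [sum_add_distrib, sum_add_distrib, Equiv.sum_comp σ (fun c => if p c then 1 else 0)] at h
  simpa only [card_filter] using Nat.add_right_cancel h

variable [LinearOrder α] (σ : Perm α)

theorem card_filter_lt_and_le_apply_eq (t : α) :
    #{c | c < t ∧ t ≤ σ c} = #{c | σ c < t ∧ t ≤ c} := by
  simpa only [not_lt, and_comm] using σ.card_filter_and_not_apply_eq (· < t)

theorem card_filter_le_and_lt_apply_eq (t : α) :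
    #{c | c ≤ t ∧ t < σ c} = #{c | σ c ≤ t ∧ t < c} := by
  simpa only [not_le, and_comm] using σ.card_filter_and_not_apply_eq (· ≤ t)

def upperNestings : Finset (α × α) := {p | p.1 < p.2 ∧ p.2 ≤ σ p.2 ∧ σ p.2 < σ p.1}

def lowerNestings : Finset (α × α) := {p | p.2 < p.1 ∧ σ p.2 < p.2 ∧ σ p.1 < σ p.2}

def upperCrossings : Finset (α × α) := {p | p.1 < p.2 ∧ p.2 ≤ σ p.1 ∧ σ p.1 < σ p.2}

def lowerCrossings : Finset (α × α) := {p | p.2 < p.1 ∧ σ p.1 < p.2 ∧ σ p.2 < σ p.1}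

theorem card_inversions_eq_add :
    #{p : α × α | p.1 < p.2 ∧ σ p.2 < σ p.1} =
      #(upperNestings σ) + #(lowerNestings σ) +
        #{p : α × α | p.1 ≤ σ p.1 ∧ σ p.2 < p.1 ∧ p.1 ≤ p.2} +
        #{p : α × α | σ p.2 < p.2 ∧ p.1 ≤ σ p.2 ∧ σ p.2 < σ p.1} := by
  rw [lowerNestings, card_filter_prod_comm fun p => p.2 < p.1 ∧ σ p.2 < p.2 ∧ σ p.1 < σ p.2,
    upperNestings]
  simp only [card_filter, ← sum_add_distrib]
  exact sum_congr rfl fun p _ => by grind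

theorem card_drops_across_weakExcedances :
    #{p : α × α | p.1 ≤ σ p.1 ∧ σ p.2 < p.1 ∧ p.1 ≤ p.2} =
      #(upperNestings σ) + #(upperCrossings σ) := by
  calc #{p : α × α | p.1 ≤ σ p.1 ∧ σ p.2 < p.1 ∧ p.1 ≤ p.2}
      = #{p : α × α | p.1 ≤ σ p.1 ∧ p.2 < p.1 ∧ p.1 ≤ σ p.2} :=
        card_filter_prod_congr_fst fun a => by
          by_cases ha : a ≤ σ a
          · simpa only [ha, true_and] using (σ.card_filter_lt_and_le_apply_eq a).symm
          · simp only [ha, false_and]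
    _ = #{p : α × α | p.2 ≤ σ p.2 ∧ p.1 < p.2 ∧ p.2 ≤ σ p.1} :=
        card_filter_prod_comm fun p => p.1 ≤ σ p.1 ∧ p.2 < p.1 ∧ p.1 ≤ σ p.2
    _ = #(upperNestings σ) + #(upperCrossings σ) := by
        simp only [upperNestings, upperCrossings, card_filter, ← sum_add_distrib]
        exact sum_congr rfl fun p _ => by grind [Equiv.apply_eq_iff_eq]

theorem card_rises_across_dropValues :
    #{p : α × α | σ p.2 < p.2 ∧ p.1 ≤ σ p.2 ∧ σ p.2 < σ p.1} =
      #{i | σ i < i} + #(lowerNestings σ) + #(lowerCrossings σ) := by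
  calc #{p : α × α | σ p.2 < p.2 ∧ p.1 ≤ σ p.2 ∧ σ p.2 < σ p.1}
      = #{p : α × α | σ p.2 < p.2 ∧ σ p.1 ≤ σ p.2 ∧ σ p.2 < p.1} :=
        card_filter_prod_congr_snd fun b => by
          by_cases hb : σ b < b
          · simpa only [hb, true_and] using σ.card_filter_le_and_lt_apply_eq (σ b)
          · simp only [hb, false_and]
    _ = #{p : α × α | p.1 = p.2 ∧ σ p.2 < p.2} + #(lowerNestings σ) + #(lowerCrossings σ) := by
        rw [lowerCrossings, card_filter_prod_comm fun p => p.2 < p.1 ∧ σ p.1 < p.2 ∧ σ p.2 < σ p.1,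
          lowerNestings]
        simp only [card_filter, ← sum_add_distrib]
        exact sum_congr rfl fun p _ => by grind [Equiv.apply_eq_iff_eq]
    _ = #{i | σ i < i} + #(lowerNestings σ) + #(lowerCrossings σ) := by
        rw [card_filter_prod_diag fun i => σ i < i]

theorem card_inversions_eq :
    #{p : α × α | p.1 < p.2 ∧ σ p.2 < σ p.1} =
      #{i | σ i < i} + (#(upperCrossings σ) + #(lowerCrossings σ)) +
        2 * (#(upperNestings σ) + #(lowerNestings σ)) := by
  rw [card_inversions_eq_add, card_drops_across_weakExcedances, card_rises_across_dropValues]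
  ring

end Equiv.Perm

theorem crosN_eq {n : ℕ} (σ : Equiv.Perm (Fin n)) :
    crosN σ = #σ.upperCrossings + #σ.lowerCrossings := by
  rw [crosN, filter_or, card_union_of_disjoint (disjoint_filter.2 fun _ _ h h' => h.1.asymm h'.1)]
  rfl

theorem nestN_eq {n : ℕ} (σ : Equiv.Perm (Fin n)) :
    nestN σ = #σ.upperNestings + #σ.lowerNestings := by
  rw [nestN, filter_or, card_union_of_disjoint (disjoint_filter.2 fun _ _ h h' => h.1.asymm h'.1)]
  rfl

theorem stmt17 (n : ℕ) (σ : Equiv.Perm (Fin n)) :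
    invN σ = dropN σ + crosN σ + 2 * nestN σ := by
  rw [crosN_eq, nestN_eq]
  exact σ.card_inversions_eq
end
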